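/- arXiv:math/0504479 — 4 statements merged into one kernel-verified Lean document; each statement's English description precedes it below -/
import Mathlib

section
/- For every integer n ≥ 4, the number of equivalence classes of Conway sequences of n under reversal (i.e., the number of rational knots and links with n crossings) is 2^(n−4) + 2^(⌊n/2⌋−2). -/
/-
Read as compositions, Conway sequences of `n` correspond to compositions of `n - 2` (lower the
first and the last part by one), so there are `2^(n-3)` of them. A palindromic one is determined
by its first half `h`, a list of sum at most `⌊n/2⌋`; appending the part `⌊n/2⌋ + 1 - Σ h` turns
`h` into a composition of `⌊n/2⌋ + 1` with first part at least 2, so there are `2^(⌊n/2⌋-1)`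
palindromes. Reversal is an involution whose fixed points are the palindromes: each class has
two elements or is a single palindrome, so twice the number of classes is
`2^(n-3) + 2^(⌊n/2⌋-1)`.
-/

/-- A Conway sequence of `n`: a nonempty list of positive integers summing to `n`
whose first and last entries are both at least 2. -/
def IsConwaySeq (n : ℕ) (l : List ℕ) : Prop :=
  l ≠ [] ∧ (∀ x ∈ l, 0 < x) ∧ l.sum = n ∧ 2 ≤ l.headI ∧ 2 ≤ l.getLastI

section Involution

open Finset Function

variable {α : Type*} {σ : α → α} {r : α → α → Prop}

theorem Function.Involutive.quot_mk_eq_iff (hσ : Involutive σ)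
    (hr : ∀ a b, r a b ↔ a = b ∨ a = σ b) {a b : α} :
    Quot.mk r a = Quot.mk r b ↔ a = b ∨ a = σ b := by
  obtain rfl : r = fun a b => a = b ∨ a = σ b := funext₂ fun a b => propext (hr a b)
  refine Quot.eq.trans (Equivalence.eqvGen_iff ⟨fun a => .inl rfl, ?_, ?_⟩)
  · rintro a b (rfl | rfl)
    exacts [.inl rfl, .inr (hσ b).symm]
  · rintro a b c (rfl | rfl) (rfl | rfl)
    exacts [.inl rfl, .inr rfl, .inr rfl, .inl (hσ c)]

theorem Function.Involutive.card_orbit_add_card_orbit_fixed [Fintype α] [DecidableEq α]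
    (hσ : Involutive σ) (a : α) :
    #{x | x = a ∨ x = σ a} + #{x | σ x = x ∧ (x = a ∨ x = σ a)} = 2 := by
  have hpair : ({x | x = a ∨ x = σ a} : Finset α) = {a, σ a} := by ext; simp
  by_cases ha : σ a = a
  · have hfix : ({x | σ x = x ∧ (x = a ∨ x = σ a)} : Finset α) = {a} := by
      ext x; simp only [mem_filter, mem_univ, mem_singleton, ha, or_self]; grind
    rw [hpair, hfix, ha]; simp
  · have hfix : ({x | σ x = x ∧ (x = a ∨ x = σ a)} : Finset α) = ∅ := by
      ext x; simp only [mem_filter, notMem_empty, iff_false]; grind [Involutive]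
    rw [hpair, hfix, card_pair (Ne.symm ha)]; rfl

theorem Function.Involutive.two_mul_card_quot [Finite α] (hσ : Involutive σ)
    (hr : ∀ a b, r a b ↔ a = b ∨ a = σ b) :
    2 * Nat.card (Quot r) = Nat.card α + Nat.card {a // σ a = a} := by
  classical
  have := Fintype.ofFinite α
  have := Fintype.ofFinite (Quot r)
  have hcard : Fintype.card α = ∑ c, #{a | Quot.mk r a = c} := by
    rw [← card_univ]; exact card_eq_sum_card_fiberwise fun _ _ => mem_univ _
  have hfixed : Fintype.card {a // σ a = a} = ∑ c, #{a | σ a = a ∧ Quot.mk r a = c} := by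
    rw [Fintype.card_subtype]
    simp only [← filter_filter]
    exact card_eq_sum_card_fiberwise fun _ _ => mem_univ _
  have hclass (c : Quot r) : #{a | Quot.mk r a = c} + #{a | σ a = a ∧ Quot.mk r a = c} = 2 := by
    induction c using Quot.ind with
    | mk a => simpa only [hσ.quot_mk_eq_iff hr] using hσ.card_orbit_add_card_orbit_fixed a
  rw [Nat.card_eq_fintype_card, Nat.card_eq_fintype_card, Nat.card_eq_fintype_card, hcard,
    hfixed, ← sum_add_distrib, sum_const_nat fun c _ => hclass c, card_univ, mul_comm]

end Involution

open List

namespace List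

variable {l : List ℕ}

theorem getLastI_eq_headI_reverse (l : List ℕ) : l.getLastI = l.reverse.headI := by
  rcases l.eq_nil_or_concat with rfl | ⟨t, a, rfl⟩ <;> simp [getLastI_eq_getLast?_getD]

theorem pos_of_mem_modifyHead_succ (hl : ∀ x ∈ l, 0 < x) :
    ∀ x ∈ l.modifyHead (· + 1), 0 < x := by
  cases l <;> simp_all

theorem pos_of_mem_modifyHead_pred (hl : ∀ x ∈ l, 0 < x) (h : 2 ≤ l.headI) :
    ∀ x ∈ l.modifyHead (· - 1), 0 < x := by
  cases l <;> simp_all; omega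

theorem sum_modifyHead_succ (hl : l ≠ []) : (l.modifyHead (· + 1)).sum = l.sum + 1 := by
  cases l <;> simp_all; omega

theorem sum_modifyHead_pred (h : 1 ≤ l.headI) : (l.modifyHead (· - 1)).sum + 1 = l.sum := by
  cases l <;> simp_all; omega

theorem two_le_headI_modifyHead_succ (hl : ∀ x ∈ l, 0 < x) (hne : l ≠ []) :
    2 ≤ (l.modifyHead (· + 1)).headI := by
  cases l <;> simp_all; omega

theorem modifyHead_pred_modifyHead_succ : (l.modifyHead (· + 1)).modifyHead (· - 1) = l := by
  cases l <;> simp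

theorem modifyHead_succ_modifyHead_pred (h : 1 ≤ l.headI) :
    (l.modifyHead (· - 1)).modifyHead (· + 1) = l := by
  cases l <;> simp_all

theorem two_le_getLastI_modifyHead_succ_iff (hl : 2 ≤ l.sum) :
    2 ≤ (l.modifyHead (· + 1)).getLastI ↔ 2 ≤ l.getLastI := by
  rcases l with _ | ⟨a, _ | ⟨b, t⟩⟩ <;> simp_all [getLastI_eq_getLast?_getD]
  omega

theorem exists_eq_append_append_reverse_of_reverse_eq {α : Type*} {l : List α}
    (hl : l.reverse = l) : ∃ h m : List α, m.length ≤ 1 ∧ l = h ++ m ++ h.reverse := by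
  have hp := Palindrome.of_reverse_eq hl
  clear hl
  induction hp with
  | nil => exact ⟨[], [], by simp⟩
  | singleton x => exact ⟨[], [x], by simp⟩
  | cons_concat x _ ih =>
    obtain ⟨h, m, hm, rfl⟩ := ih
    exact ⟨x :: h, m, hm, by simp⟩

end List

namespace Composition

variable {m : ℕ}

theorem blocks_ne_nil (c : Composition (m + 1)) : c.blocks ≠ [] := by
  simp [blocks_eq_nil]

def succHeadEquiv (m : ℕ) :
    Composition (m + 1) ≃ {c : Composition (m + 2) // 2 ≤ c.blocks.headI} where
  toFun c :=
    ⟨⟨c.blocks.modifyHead (· + 1), pos_of_mem_modifyHead_succ (fun _ => c.blocks_pos) _,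
      by rw [sum_modifyHead_succ c.blocks_ne_nil, c.blocks_sum]⟩,
    two_le_headI_modifyHead_succ (fun _ => c.blocks_pos) c.blocks_ne_nil⟩
  invFun c := ⟨c.1.blocks.modifyHead (· - 1),
    pos_of_mem_modifyHead_pred (fun _ => c.1.blocks_pos) c.2 _, by
      have := sum_modifyHead_pred (l := c.1.blocks) (by omega)
      rw [c.1.blocks_sum] at this
      omega⟩
  left_inv c := Composition.ext modifyHead_pred_modifyHead_succ
  right_inv c := Subtype.ext <| Composition.ext <| modifyHead_succ_modifyHead_pred (by omega)

theorem card_two_le_headI (m : ℕ) :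
    Nat.card {c : Composition (m + 2) // 2 ≤ c.blocks.headI} = 2 ^ m := by
  rw [← Nat.card_congr (succHeadEquiv m), Nat.card_eq_fintype_card, composition_card,
    Nat.add_sub_cancel]

theorem card_two_le_headI_and_two_le_getLastI (m : ℕ) :
    Nat.card {c : Composition (m + 3) // 2 ≤ c.blocks.headI ∧ 2 ≤ c.blocks.getLastI} = 2 ^ m := by
  calc _ = Nat.card {c : {c : Composition (m + 3) // 2 ≤ c.blocks.headI} //
        2 ≤ c.1.blocks.getLastI} :=
        Nat.card_congr (Equiv.subtypeSubtypeEquivSubtypeInter _ _).symm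
    _ = Nat.card {c : Composition (m + 2) // 2 ≤ c.blocks.getLastI} :=
        Nat.card_congr <| ((succHeadEquiv (m + 1)).subtypeEquiv fun c =>
          (two_le_getLastI_modifyHead_succ_iff (by rw [c.blocks_sum]; omega)).symm).symm
    _ = Nat.card {c : Composition (m + 2) // 2 ≤ c.blocks.headI} :=
        Nat.card_congr <| reverse_involutive.toPerm.subtypeEquiv fun c => by
          simp [getLastI_eq_headI_reverse]
    _ = 2 ^ m := card_two_le_headI m

theorem sum_dropLast_add_getLast (c : Composition (m + 1)) :
    c.blocks.dropLast.sum + c.blocks.getLast c.blocks_ne_nil = m + 1 := by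
  conv_rhs => rw [← c.blocks_sum, ← dropLast_append_getLast c.blocks_ne_nil]
  rw [sum_append, sum_singleton]

def sumLEEquiv (k : ℕ) :
    {l : List ℕ // (∀ x ∈ l, 0 < x) ∧ l.sum ≤ k} ≃ Composition (k + 1) where
  toFun l := ⟨l.1 ++ [k + 1 - l.1.sum], fun hx => by
      rcases mem_append.1 hx with hx | hx
      · exact l.2.1 _ hx
      · rw [mem_singleton.1 hx]; omega,
    by rw [sum_append, sum_singleton]; have := l.2.2; omega⟩
  invFun c := ⟨c.blocks.dropLast, fun _ hx => c.blocks_pos (mem_of_mem_dropLast hx), by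
    have := c.sum_dropLast_add_getLast
    have := c.blocks_pos (getLast_mem c.blocks_ne_nil)
    omega⟩
  left_inv l := Subtype.ext dropLast_concat
  right_inv c := Composition.ext <| by
    conv_rhs => rw [← dropLast_append_getLast c.blocks_ne_nil]
    have := c.sum_dropLast_add_getLast
    change c.blocks.dropLast ++ [k + 1 - c.blocks.dropLast.sum] = _
    rw [Nat.sub_eq_of_eq_add' this.symm]

theorem card_sumLE_and_two_le_headI (j : ℕ) :
    Nat.card {l : List ℕ // ((∀ x ∈ l, 0 < x) ∧ l.sum ≤ j + 1) ∧ (l = [] ∨ 2 ≤ l.headI)} =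
      2 ^ j := by
  calc _ = Nat.card {l : {l : List ℕ // (∀ x ∈ l, 0 < x) ∧ l.sum ≤ j + 1} //
        l.1 = [] ∨ 2 ≤ l.1.headI} :=
        Nat.card_congr (Equiv.subtypeSubtypeEquivSubtypeInter _ _).symm
    _ = Nat.card {c : Composition (j + 2) // 2 ≤ c.blocks.headI} :=
        Nat.card_congr <| (sumLEEquiv (j + 1)).subtypeEquiv fun l => by
          rcases l with ⟨_ | ⟨a, t⟩, hl⟩ <;> simp [sumLEEquiv]
    _ = 2 ^ j := card_two_le_headI j

end Composition

section ConwaySeq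

variable {n : ℕ} {l : List ℕ}

theorem isConwaySeq_iff :
    IsConwaySeq n l ↔ (∀ x ∈ l, 0 < x) ∧ l.sum = n ∧ 2 ≤ l.headI ∧ 2 ≤ l.reverse.headI := by
  rw [IsConwaySeq, getLastI_eq_headI_reverse, and_iff_right_iff_imp]
  rintro ⟨-, -, h, -⟩ rfl
  simp at h

theorem IsConwaySeq.reverse (hl : IsConwaySeq n l) : IsConwaySeq n l.reverse := by
  rw [isConwaySeq_iff] at hl ⊢
  simp_all

def conwaySeqEquiv (n : ℕ) : {l // IsConwaySeq n l} ≃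
    {c : Composition n // 2 ≤ c.blocks.headI ∧ 2 ≤ c.blocks.getLastI} where
  toFun l := ⟨⟨l.1, fun hx => l.2.2.1 _ hx, l.2.2.2.1⟩, l.2.2.2.2⟩
  invFun c := ⟨c.1.blocks, by
    rw [isConwaySeq_iff, ← getLastI_eq_headI_reverse]
    exact ⟨fun _ hx => c.1.blocks_pos hx, c.1.blocks_sum, c.2⟩⟩

theorem card_conwaySeq (hn : 3 ≤ n) : Nat.card {l // IsConwaySeq n l} = 2 ^ (n - 3) := by
  obtain ⟨m, rfl⟩ : ∃ m, n = m + 3 := ⟨n - 3, by omega⟩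
  rw [Nat.card_congr (conwaySeqEquiv _), Composition.card_two_le_headI_and_two_le_getLastI,
    Nat.add_sub_cancel]

end ConwaySeq

section Palindrome

variable {n : ℕ} {h l : List ℕ}

def mirror (n : ℕ) (h : List ℕ) : List ℕ :=
  h ++ (if 2 * h.sum = n then [] else [n - 2 * h.sum]) ++ h.reverse

theorem reverse_mirror : (mirror n h).reverse = mirror n h := by
  unfold mirror; split <;> simp

theorem take_mirror : (mirror n h).take ((mirror n h).length / 2) = h := by
  have : (mirror n h).length / 2 = h.length := by unfold mirror; split <;> simp <;> omega
  rw [this, mirror, append_assoc, take_left]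

theorem isConwaySeq_mirror (hn : 2 ≤ n) (hpos : ∀ x ∈ h, 0 < x) (hsum : h.sum ≤ n / 2)
    (hhead : h = [] ∨ 2 ≤ h.headI) : IsConwaySeq n (mirror n h) := by
  have hhead' : 2 ≤ (mirror n h).headI := by
    rcases h with _ | ⟨a, t⟩
    · rw [mirror, if_neg (by rw [sum_nil]; omega)]; simpa using hn
    · simpa [mirror] using hhead
  rw [isConwaySeq_iff, reverse_mirror]
  refine ⟨fun x hx => ?_, ?_, hhead', hhead'⟩
  · simp only [mirror, mem_append, mem_reverse] at hx
    rcases hx with (hx | hx) | hx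
    · exact hpos x hx
    · split at hx <;> simp at hx
      omega
    · exact hpos x hx
  · unfold mirror; split <;> simp <;> omega

theorem exists_mirror_eq (hl : IsConwaySeq n l) (hp : l.reverse = l) :
    ∃ h, ((∀ x ∈ h, 0 < x) ∧ h.sum ≤ n / 2) ∧ (h = [] ∨ 2 ≤ h.headI) ∧ mirror n h = l := by
  obtain ⟨h, m, hm, rfl⟩ := exists_eq_append_append_reverse_of_reverse_eq hp
  rw [isConwaySeq_iff] at hl
  obtain ⟨hpos, hsum, hhead, -⟩ := hl
  simp only [sum_append, sum_reverse] at hsum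
  refine ⟨h, ⟨fun x hx => hpos x (by simp [hx]), by omega⟩, ?_, ?_⟩
  · rcases h with _ | ⟨a, t⟩
    · exact .inl rfl
    · exact .inr (by simpa using hhead)
  · rcases m with _ | ⟨c, _ | ⟨d, t⟩⟩
    · rw [sum_nil] at hsum
      simp [mirror, show 2 * h.sum = n by omega]
    · have := hpos c (by simp)
      rw [sum_singleton] at hsum
      simp [mirror, show 2 * h.sum ≠ n by omega, show n - 2 * h.sum = c by omega]
    · simp at hm

end Palindrome

theorem card_palindromic_conwaySeq {n : ℕ} (hn : 2 ≤ n) :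
    Nat.card {l // IsConwaySeq n l ∧ l.reverse = l} = 2 ^ (n / 2 - 1) := by
  let toPalindrome (h : {h : List ℕ // ((∀ x ∈ h, 0 < x) ∧ h.sum ≤ n / 2) ∧
      (h = [] ∨ 2 ≤ h.headI)}) : {l // IsConwaySeq n l ∧ l.reverse = l} :=
    ⟨mirror n h.1, isConwaySeq_mirror hn h.2.1.1 h.2.1.2 h.2.2, reverse_mirror⟩
  have hbij : Function.Bijective toPalindrome := by
    refine ⟨fun h₁ h₂ heq => Subtype.ext ?_, fun l => ?_⟩
    · rw [← take_mirror (n := n) (h := h₁.1), ← take_mirror (n := n) (h := h₂.1)]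
      simp only [toPalindrome, Subtype.ext_iff] at heq
      rw [heq]
    · obtain ⟨h, hh, hhead, hl⟩ := exists_mirror_eq l.2.1 l.2.2
      exact ⟨⟨h, hh, hhead⟩, Subtype.ext hl⟩
  obtain ⟨j, hj⟩ : ∃ j, n / 2 = j + 1 := ⟨n / 2 - 1, by omega⟩
  rw [← Nat.card_eq_of_bijective _ hbij, hj, Composition.card_sumLE_and_two_le_headI,
    Nat.add_sub_cancel]

/-- For every `n ≥ 4`, the number of equivalence classes of Conway sequences of `n`
under reversal is `2^(n-4) + 2^(⌊n/2⌋-2)`. -/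
theorem rational_KL_count (n : ℕ) (hn : 4 ≤ n) :
    Nat.card (Quot (fun a b : {l : List ℕ // IsConwaySeq n l} =>
      a.1 = b.1 ∨ a.1 = b.1.reverse)) = 2 ^ (n - 4) + 2 ^ (n / 2 - 2) := by
  let rev (l : {l // IsConwaySeq n l}) : {l // IsConwaySeq n l} := ⟨l.1.reverse, l.2.reverse⟩
  have hrev : Function.Involutive rev := fun l => Subtype.ext l.1.reverse_reverse
  have : Finite {l // IsConwaySeq n l} := .of_equiv _ (conwaySeqEquiv n).symm
  have hcount := hrev.two_mul_card_quot (r := fun a b => a.1 = b.1 ∨ a.1 = b.1.reverse)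
    fun a b => by simp [rev, Subtype.ext_iff]
  have hfixed : Nat.card {l // rev l = l} = Nat.card {l // IsConwaySeq n l ∧ l.reverse = l} :=
    Nat.card_congr <| (Equiv.subtypeEquivRight fun l => Subtype.ext_iff).trans
      (Equiv.subtypeSubtypeEquivSubtypeInter (IsConwaySeq n) fun l => l.reverse = l)
  rw [hfixed, card_conwaySeq (by omega), card_palindromic_conwaySeq (by omega),
    show n - 3 = n - 4 + 1 by omega, show n / 2 - 1 = n / 2 - 2 + 1 by omega,
    pow_succ, pow_succ] at hcount
  linarith
end

section
/- For every integer n ≥ 2, the number of palindromic Conway sequences of n (those lists equal to their own reverse) is exactly 2^(⌊n/2⌋−1). -/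
theorem List.Palindrome.getLastI_eq_headI {α : Type*} [Inhabited α] {l : List α}
    (hl : l.Palindrome) : l.getLastI = l.headI := by
  cases hl with
  | nil | singleton => rfl
  | cons_concat a => rw [getLastI_eq_getLast?_getD, ← cons_append, getLast?_concat]; rfl

theorem List.forall_mem_cons_append_singleton {α : Type*} {a b : α} {l : List α}
    {p : α → Prop} :
    (∀ x ∈ a :: (l ++ [b]), p x) ↔ p a ∧ (∀ x ∈ l, p x) ∧ p b := by
  simp [or_imp, forall_and]

namespace ConwaySeq

open List Set

def palindromicCompositions (m : ℕ) : Set (List ℕ) :=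
  {l | (∀ x ∈ l, 0 < x) ∧ l.sum = m ∧ l.Palindrome}

def wrapOnes (l : List ℕ) : List ℕ := 1 :: (l ++ [1])

def bumpEnds : List ℕ → List ℕ :=
  bidirectionalRec (motive := fun _ => List ℕ) [2] (fun a => [a + 2])
    fun a l b _ => (a + 1) :: (l ++ [b + 1])

@[simp] lemma bumpEnds_nil : bumpEnds [] = [2] := bidirectionalRec_nil ..

@[simp] lemma bumpEnds_singleton (a : ℕ) : bumpEnds [a] = [a + 2] :=
  bidirectionalRec_singleton ..

@[simp] lemma bumpEnds_cons_append (a : ℕ) (l : List ℕ) (b : ℕ) :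
    bumpEnds (a :: (l ++ [b])) = (a + 1) :: (l ++ [b + 1]) :=
  bidirectionalRec_cons_append ..

lemma wrapOnes_injective : Function.Injective wrapOnes := by
  intro l l' h
  simpa [wrapOnes] using h

-- Positivity is needed: `bumpEnds [] = [2] = bumpEnds [0]`.
lemma injOn_bumpEnds : InjOn bumpEnds {l | ∀ x ∈ l, 0 < x} := by
  intro l hl l' hl' h
  induction l using bidirectionalRecOn <;> induction l' using bidirectionalRecOn <;>
    simp_all

lemma headI_wrapOnes (l : List ℕ) : (wrapOnes l).headI = 1 := rfl

lemma two_le_headI_bumpEnds {l : List ℕ} (hl : ∀ x ∈ l, 0 < x) :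
    2 ≤ (bumpEnds l).headI := by
  induction l using bidirectionalRecOn with
  | H0 | H1 => simp
  | Hn a l b =>
    have := hl a mem_cons_self
    simp only [bumpEnds_cons_append, headI_cons]
    omega

lemma sum_bumpEnds (l : List ℕ) : (bumpEnds l).sum = l.sum + 2 := by
  induction l using bidirectionalRecOn with
  | H0 | H1 => simp
  | Hn a l b => simp; omega

lemma pos_of_mem_bumpEnds {l : List ℕ} (hl : ∀ x ∈ l, 0 < x) :
    ∀ x ∈ bumpEnds l, 0 < x := by
  induction l using bidirectionalRecOn with
  | H0 | H1 => simp
  | Hn a l b =>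
    rw [forall_mem_cons_append_singleton] at hl
    simp only [bumpEnds_cons_append, forall_mem_cons_append_singleton]
    exact ⟨a.succ_pos, hl.2.1, b.succ_pos⟩

lemma palindrome_bumpEnds {l : List ℕ} (hl : l.Palindrome) : (bumpEnds l).Palindrome := by
  cases hl with
  | nil => simpa using .singleton 2
  | singleton a => simpa using .singleton (a + 2)
  | cons_concat a hl => simpa using hl.cons_concat (a + 1)

lemma wrapOnes_mem_palindromicCompositions {m : ℕ} {l : List ℕ}
    (hl : l ∈ palindromicCompositions m) : wrapOnes l ∈ palindromicCompositions (m + 2) := by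
  obtain ⟨hpos, hsum, hpal⟩ := hl
  refine ⟨forall_mem_cons_append_singleton.2 ⟨one_pos, hpos, one_pos⟩, ?_,
    hpal.cons_concat 1⟩
  simp [wrapOnes, hsum]
  omega

lemma bumpEnds_mem_palindromicCompositions {m : ℕ} {l : List ℕ}
    (hl : l ∈ palindromicCompositions m) : bumpEnds l ∈ palindromicCompositions (m + 2) :=
  ⟨pos_of_mem_bumpEnds hl.1, by rw [sum_bumpEnds, hl.2.1], palindrome_bumpEnds hl.2.2⟩

lemma palindromicCompositions_add_two (m : ℕ) :
    palindromicCompositions (m + 2) =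
      wrapOnes '' palindromicCompositions m ∪ bumpEnds '' palindromicCompositions m := by
  refine Subset.antisymm ?_ (union_subset ?_ ?_)
  · rintro l ⟨hpos, hsum, hpal⟩
    cases hpal with
    | nil => simp at hsum
    | singleton a =>
      obtain rfl : a = m + 2 := by simpa using hsum
      right
      rcases m.eq_zero_or_pos with rfl | hm
      · exact ⟨[], ⟨by simp, rfl, .nil⟩, bumpEnds_nil⟩
      · exact ⟨[m], ⟨by simpa, by simp, .singleton m⟩, bumpEnds_singleton m⟩
    | @cons_concat a t hpal =>
      rw [forall_mem_cons_append_singleton] at hpos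
      simp only [sum_cons, sum_append, sum_nil] at hsum
      rcases a with _ | _ | c
      · exact absurd hpos.1 (lt_irrefl 0)
      · exact Or.inl ⟨t, ⟨hpos.2.1, by omega, hpal⟩, rfl⟩
      · refine Or.inr ⟨(c + 1) :: (t ++ [c + 1]), ⟨?_, ?_, hpal.cons_concat _⟩, by simp⟩
        · exact forall_mem_cons_append_singleton.2 ⟨c.succ_pos, hpos.2.1, c.succ_pos⟩
        · simp only [sum_cons, sum_append, sum_nil]
          omega
  · rintro _ ⟨l, hl, rfl⟩
    exact wrapOnes_mem_palindromicCompositions hl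
  · rintro _ ⟨l, hl, rfl⟩
    exact bumpEnds_mem_palindromicCompositions hl

lemma palindromicCompositions_zero : palindromicCompositions 0 = {[]} := by
  ext l
  simp only [Set.mem_singleton_iff]
  refine ⟨fun ⟨hpos, hsum, _⟩ => ?_, ?_⟩
  · exact eq_nil_iff_forall_not_mem.2 fun x hx => (hpos x hx).ne' (sum_eq_zero_iff.1 hsum x hx)
  · rintro rfl
    exact ⟨by simp, rfl, .nil⟩

lemma palindromicCompositions_one : palindromicCompositions 1 = {[1]} := by
  ext l
  simp only [Set.mem_singleton_iff]
  refine ⟨fun ⟨hpos, hsum, hpal⟩ => ?_, ?_⟩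
  · cases hpal with
    | nil => simp at hsum
    | singleton a => simpa using hsum
    | cons_concat a _ =>
      have := hpos a mem_cons_self
      simp only [sum_cons, sum_append, sum_nil] at hsum
      omega
  · rintro rfl
    exact ⟨by simp, rfl, .singleton 1⟩

lemma ncard_image_bumpEnds (m : ℕ) :
    (bumpEnds '' palindromicCompositions m).ncard = (palindromicCompositions m).ncard :=
  (injOn_bumpEnds.mono fun _ hl => hl.1).ncard_image

lemma disjoint_image_wrapOnes_image_bumpEnds (m : ℕ) :
    Disjoint (wrapOnes '' palindromicCompositions m) (bumpEnds '' palindromicCompositions m) := by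
  rw [Set.disjoint_left]
  rintro _ ⟨l, -, rfl⟩ ⟨l', hl', h⟩
  have := two_le_headI_bumpEnds hl'.1
  rw [h, headI_wrapOnes] at this
  omega

theorem ncard_palindromicCompositions : ∀ m, (palindromicCompositions m).ncard = 2 ^ (m / 2)
  | 0 => by rw [palindromicCompositions_zero, ncard_singleton]; rfl
  | 1 => by rw [palindromicCompositions_one, ncard_singleton]; rfl
  | m + 2 => by
    have ih := ncard_palindromicCompositions m
    have hfin : (palindromicCompositions m).Finite :=
      finite_of_ncard_ne_zero (by rw [ih]; positivity)
    rw [palindromicCompositions_add_two,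
      ncard_union_eq (disjoint_image_wrapOnes_image_bumpEnds m) (hfin.image _) (hfin.image _),
      ncard_image_of_injective _ wrapOnes_injective,
      ncard_image_bumpEnds m, ih, Nat.add_div_right _ two_pos,
      pow_succ, mul_two]

lemma isConwaySeq_and_reverse_eq_iff {n : ℕ} {l : List ℕ} :
    IsConwaySeq n l ∧ l.reverse = l ↔ l ∈ palindromicCompositions n ∧ 2 ≤ l.headI := by
  constructor
  · rintro ⟨⟨-, hpos, hsum, hhead, -⟩, hrev⟩
    exact ⟨⟨hpos, hsum, .of_reverse_eq hrev⟩, hhead⟩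
  · rintro ⟨⟨hpos, hsum, hpal⟩, hhead⟩
    refine ⟨⟨?_, hpos, hsum, hhead, hpal.getLastI_eq_headI ▸ hhead⟩, hpal.reverse_eq⟩
    rintro rfl
    simp at hhead

lemma image_bumpEnds_palindromicCompositions (m : ℕ) :
    bumpEnds '' palindromicCompositions m =
      {l | l ∈ palindromicCompositions (m + 2) ∧ 2 ≤ l.headI} := by
  refine Subset.antisymm ?_ fun l ⟨hl, hhead⟩ => ?_
  · rintro _ ⟨l, hl, rfl⟩
    exact ⟨bumpEnds_mem_palindromicCompositions hl, two_le_headI_bumpEnds hl.1⟩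
  · rw [palindromicCompositions_add_two] at hl
    rcases hl with ⟨l₀, -, rfl⟩ | hl
    · rw [headI_wrapOnes] at hhead
      omega
    · exact hl

end ConwaySeq

open ConwaySeq in
/-- For every `n ≥ 2`, the number of palindromic Conway sequences of `n`
is `2^(⌊n/2⌋-1)`. -/
theorem palindromic_conway_seq_count (n : ℕ) (hn : 2 ≤ n) :
    Nat.card {l : List ℕ // IsConwaySeq n l ∧ l.reverse = l} = 2 ^ (n / 2 - 1) := by
  obtain ⟨m, rfl⟩ : ∃ m, n = m + 2 := ⟨n - 2, by omega⟩
  simp_rw [isConwaySeq_and_reverse_eq_iff]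
  rw [← Set.coe_ofPred, Nat.card_coe_set_eq, ← image_bumpEnds_palindromicCompositions,
    ncard_image_bumpEnds m, ncard_palindromicCompositions,
    Nat.add_div_right _ two_pos, Nat.add_sub_cancel]
end

section
/- For every integer n ≥ 4, the number of equivalence classes of Conway sequences of n under reversal equals the number of equivalence classes of binary strings of length n−3 under reversal; that is, the counting sequence of rational knots and links with n crossings coincides (with shift 3) with the sequence A005418. -/
section

open List

/-- `compOfCuts bs` is the composition of `bs.length + 1` with a block boundary after `i + 1`
exactly when `bs[i] = true`. -/
def compOfCuts : List Bool → List ℕ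
  | [] => [1]
  | true :: t => 1 :: compOfCuts t
  | false :: t => (compOfCuts t).modifyHead (· + 1)

def cutsOfComp : List ℕ → List Bool
  | [] => []
  | [a] => replicate (a - 1) false
  | a :: b :: t => replicate (a - 1) false ++ true :: cutsOfComp (b :: t)

theorem exists_compOfCuts_eq_cons (bs : List Bool) :
    ∃ a r, 0 < a ∧ compOfCuts bs = a :: r := by
  induction bs with
  | nil => exact ⟨1, [], one_pos, rfl⟩
  | cons b t ih =>
    obtain ⟨a, r, ha, h⟩ := ih
    cases b
    · exact ⟨a + 1, r, a.succ_pos, by simp [compOfCuts, h]⟩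
    · exact ⟨1, a :: r, one_pos, by simp [compOfCuts, h]⟩

theorem compOfCuts_ne_nil (bs : List Bool) : compOfCuts bs ≠ [] := by
  obtain ⟨a, r, -, h⟩ := exists_compOfCuts_eq_cons bs
  simp [h]

theorem pos_of_mem_compOfCuts {bs : List Bool} {x : ℕ} (hx : x ∈ compOfCuts bs) : 0 < x := by
  induction bs generalizing x with
  | nil => simp_all [compOfCuts]
  | cons b t ih =>
    obtain ⟨a, r, -, h⟩ := exists_compOfCuts_eq_cons t
    cases b <;> simp only [compOfCuts, h, modifyHead_cons, mem_cons] at hx ih ⊢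
    · rcases hx with rfl | hx
      exacts [a.succ_pos, ih (.inr hx)]
    · rcases hx with rfl | hx
      exacts [one_pos, ih hx]

theorem sum_compOfCuts (bs : List Bool) : (compOfCuts bs).sum = bs.length + 1 := by
  induction bs with
  | nil => rfl
  | cons b t ih =>
    obtain ⟨a, r, -, h⟩ := exists_compOfCuts_eq_cons t
    rw [h] at ih
    cases b <;> simp [compOfCuts, h] at ih ⊢ <;> omega

theorem two_le_headI_compOfCuts_iff (bs : List Bool) :
    2 ≤ (compOfCuts bs).headI ↔ bs.head? = some false := by
  rcases bs with _ | ⟨_ | _, t⟩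
  · simp [compOfCuts]
  · obtain ⟨a, r, ha, h⟩ := exists_compOfCuts_eq_cons t
    simp [compOfCuts, h]; omega
  · simp [compOfCuts]

theorem compOfCuts_replicate_false_append (k : ℕ) (bs : List Bool) :
    compOfCuts (replicate k false ++ bs) = (compOfCuts bs).modifyHead (· + k) := by
  induction k with
  | zero => exact (congrFun modifyHead_id _).symm
  | succ k ih =>
    rw [replicate_succ, cons_append, compOfCuts, ih, modifyHead_modifyHead]
    rfl

theorem compOfCuts_cutsOfComp :
    ∀ {l : List ℕ}, l ≠ [] → (∀ x ∈ l, 0 < x) → compOfCuts (cutsOfComp l) = l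
  | [a], _, hpos => by
    have := hpos a (mem_singleton_self a)
    rw [cutsOfComp, ← append_nil (replicate _ _), compOfCuts_replicate_false_append]
    simp [compOfCuts]; omega
  | a :: b :: t, _, hpos => by
    have := hpos a mem_cons_self
    rw [cutsOfComp, compOfCuts_replicate_false_append, compOfCuts,
      compOfCuts_cutsOfComp (cons_ne_nil b t) fun x hx => hpos x (mem_cons_of_mem a hx)]
    simp; omega

theorem cutsOfComp_succ_cons {a : ℕ} (ha : 0 < a) (r : List ℕ) :
    cutsOfComp ((a + 1) :: r) = false :: cutsOfComp (a :: r) := by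
  obtain ⟨a, rfl⟩ := Nat.exists_eq_add_of_lt ha
  cases r <;> simp [cutsOfComp, replicate_succ]

theorem cutsOfComp_compOfCuts (bs : List Bool) : cutsOfComp (compOfCuts bs) = bs := by
  induction bs with
  | nil => rfl
  | cons b t ih =>
    obtain ⟨a, r, ha, h⟩ := exists_compOfCuts_eq_cons t
    rw [h] at ih
    cases b
    · simp [compOfCuts, h, cutsOfComp_succ_cons ha, ih]
    · simp [compOfCuts, h, cutsOfComp, ih]

theorem compOfCuts_injective : Function.Injective compOfCuts :=
  Function.LeftInverse.injective cutsOfComp_compOfCuts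

theorem cutsOfComp_append_singleton :
    ∀ {l : List ℕ}, l ≠ [] → ∀ a,
      cutsOfComp (l ++ [a]) = cutsOfComp l ++ true :: replicate (a - 1) false
  | [_], _, _ => rfl
  | b :: c :: t, _, a => by
    rw [cons_append, cons_append, cutsOfComp, ← cons_append,
      cutsOfComp_append_singleton (cons_ne_nil c t), cutsOfComp]
    simp

theorem cutsOfComp_reverse : ∀ l : List ℕ, cutsOfComp l.reverse = (cutsOfComp l).reverse
  | [] => rfl
  | [_] => by simp [cutsOfComp]
  | a :: b :: t => by
    rw [reverse_cons, cutsOfComp_append_singleton (by simp), cutsOfComp_reverse (b :: t),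
      cutsOfComp]
    simp

theorem compOfCuts_reverse (bs : List Bool) :
    compOfCuts bs.reverse = (compOfCuts bs).reverse := by
  conv_lhs => rw [← cutsOfComp_compOfCuts bs, ← cutsOfComp_reverse]
  exact compOfCuts_cutsOfComp (by simpa using compOfCuts_ne_nil bs)
    fun x hx => pos_of_mem_compOfCuts (mem_reverse.mp hx)

theorem isConwaySeq_compOfCuts_iff {n : ℕ} {bs : List Bool} :
    IsConwaySeq n (compOfCuts bs) ↔
      bs.length + 1 = n ∧ bs.head? = some false ∧ bs.getLast? = some false := by
  have hlast : (compOfCuts bs).getLastI = (compOfCuts bs.reverse).headI := by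
    rw [compOfCuts_reverse, getLastI_eq_getLast?_getD, ← head?_reverse]
    cases (compOfCuts bs).reverse <;> rfl
  simp only [IsConwaySeq, hlast, two_le_headI_compOfCuts_iff, sum_compOfCuts, head?_reverse]
  exact ⟨fun h => h.2.2, fun h => ⟨compOfCuts_ne_nil bs, fun _ => pos_of_mem_compOfCuts, h⟩⟩

theorem List.exists_cons_ofFn_append_eq {α : Type*} {m : ℕ} {a c : α} {L : List α}
    (hlen : L.length = m + 2) (hhead : L.head? = some a) (hlast : L.getLast? = some c) :
    ∃ s : Fin m → α, a :: (ofFn s ++ [c]) = L := by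
  obtain _ | ⟨b, t⟩ := L
  · simp at hhead
  obtain rfl | ⟨mid, c', rfl⟩ := t.eq_nil_or_concat'
  · simp at hlen
  rw [← cons_append, getLast?_concat, Option.some_inj] at hlast
  rw [head?_cons, Option.some_inj] at hhead
  obtain rfl : m = mid.length := by simp at hlen; omega
  subst hhead hlast
  exact ⟨mid.get, by rw [ofFn_get]⟩

theorem List.ofFn_comp_rev {α : Type*} {m : ℕ} (s : Fin m → α) :
    ofFn (s ∘ Fin.rev) = (ofFn s).reverse := by
  rw [ofFn_eq_map, ofFn_eq_map, ← map_reverse, finRange_reverse, map_map]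

def conwayOfString {m : ℕ} (s : Fin m → Bool) : List ℕ :=
  compOfCuts (false :: (ofFn s ++ [false]))

theorem isConwaySeq_conwayOfString {m : ℕ} (s : Fin m → Bool) :
    IsConwaySeq (m + 3) (conwayOfString s) :=
  isConwaySeq_compOfCuts_iff.mpr ⟨by simp, rfl, by rw [← cons_append, getLast?_concat]⟩

theorem conwayOfString_injective {m : ℕ} : Function.Injective (@conwayOfString m) := by
  intro s t h
  simpa using compOfCuts_injective h

theorem conwayOfString_comp_rev {m : ℕ} (s : Fin m → Bool) :
    conwayOfString (s ∘ Fin.rev) = (conwayOfString s).reverse := by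
  rw [conwayOfString, conwayOfString, ← compOfCuts_reverse, ofFn_comp_rev]
  simp

theorem exists_conwayOfString_eq {m : ℕ} {l : List ℕ} (hl : IsConwaySeq (m + 3) l) :
    ∃ s : Fin m → Bool, conwayOfString s = l := by
  have hcomp := compOfCuts_cutsOfComp hl.1 hl.2.1
  rw [← hcomp, isConwaySeq_compOfCuts_iff] at hl
  obtain ⟨hlen, hhead, hlast⟩ := hl
  obtain ⟨s, hs⟩ := exists_cons_ofFn_append_eq (m := m) (by omega) hhead hlast
  exact ⟨s, by rw [conwayOfString, hs, hcomp]⟩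

noncomputable def conwayEquiv (m : ℕ) :
    (Fin m → Bool) ≃ {l : List ℕ // IsConwaySeq (m + 3) l} :=
  Equiv.ofBijective (fun s => ⟨conwayOfString s, isConwaySeq_conwayOfString s⟩)
    ⟨fun _ _ h => conwayOfString_injective (congrArg Subtype.val h),
      fun l => (exists_conwayOfString_eq l.2).imp fun _ h => Subtype.ext h⟩

theorem coe_conwayEquiv {m : ℕ} (s : Fin m → Bool) :
    (conwayEquiv m s : List ℕ) = conwayOfString s :=
  rfl

end

/-- For every `n ≥ 4`, the number of equivalence classes of Conway sequences of `n`
under reversal equals the number of equivalence classes of binary strings of length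
`n - 3` under reversal (the sequence A005418, shifted by 3). -/
theorem rational_KL_count_eq_A005418 (n : ℕ) (hn : 4 ≤ n) :
    Nat.card (Quot (fun a b : {l : List ℕ // IsConwaySeq n l} =>
        a.1 = b.1 ∨ a.1 = b.1.reverse)) =
      Nat.card (Quot (fun f g : Fin (n - 3) → Bool => f = g ∨ f = g ∘ Fin.rev)) := by
  obtain ⟨m, rfl⟩ : ∃ m, n = m + 3 := ⟨n - 3, by omega⟩
  rw [Nat.add_sub_cancel]
  refine (Nat.card_congr (Quot.congr (conwayEquiv m) fun s t => ?_)).symm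
  simp only [coe_conwayEquiv, ← conwayOfString_comp_rev, conwayOfString_injective.eq_iff]
end

section
/- Let s ≥ 2 and let w be a finite list of pairs (i, ε) with i ∈ {1, …, s} a letter index and ε ∈ Bool a sign (capital/lower case). Suppose: (1) w is alternating, meaning each letter index occurs in w with only one sign (there is no index i such that both (i, true) and (i, false) occur in w); (2) every index 1, …, s occurs in w; and (3) w is palindromic (antisymmetric), meaning w equals the image of its reverse under the antimirror map φ(i, ε) = (s+1−i, ¬ε). Then s is even. -/
/-- A braid word on `s` letters is a list of pairs `(i, ε)` with `i : Fin s` a letter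
index and `ε : Bool` its case.  If the word is alternating (each index occurs with
only one sign), uses every index, and is palindromic (equal to the antimirror image
of its reverse, where the antimirror sends `(i, ε)` to `(s+1-i, ¬ε)`), then the
number of strands `s` is even. -/
theorem palindromic_braid_even_strands (s : ℕ) (hs : 2 ≤ s)
    (w : List (Fin s × Bool))
    (halt : ∀ i : Fin s, ¬((i, true) ∈ w ∧ (i, false) ∈ w))
    (hall : ∀ i : Fin s, ∃ ε : Bool, (i, ε) ∈ w)
    (hpal : w = w.reverse.map (fun p => (p.1.rev, !p.2))) :
    Even s := by
  by_contra hodd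
  rw [Nat.not_even_iff_odd] at hodd
  obtain ⟨k, hk⟩ := hodd
  have hklt : k < s := by omega
  set m : Fin s := ⟨k, hklt⟩ with hm
  have hmrev : m.rev = m := by
    ext
    simp [Fin.rev, hm]
    omega
  have hclosed : ∀ i ε, (i, ε) ∈ w → (i.rev, !ε) ∈ w := by
    intro i ε h
    rw [hpal]
    simp only [List.mem_map, List.mem_reverse]
    exact ⟨(i, ε), h, rfl⟩
  obtain ⟨ε, hε⟩ := hall m
  have h2 := hclosed m ε hε
  rw [hmrev] at h2
  apply halt m
  cases ε
  · exact ⟨h2, hε⟩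
  · exact ⟨hε, h2⟩
end
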